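/- arXiv:math/0104273 — 2 statements merged into one kernel-verified Lean document; each statement's English description precedes it below -/
import Mathlib

section
/- For a square matrix A over a commutative ℚ-algebra, the formal power series identity exp(∑_{k=1}^∞ tr(A^k) t^k / k) = det(I − tA)^{-1} holds in the ring of formal power series. -/
open PowerSeries

variable {S : Type} [CommRing S] [Algebra ℚ S]

/-- The formal exponential `exp f = ∑ₙ fⁿ/n!` of a power series `f` (with zero constant
term); the `m`-th coefficient only involves the finitely many `n ≤ m`. -/
noncomputable def formalExp (f : PowerSeries S) : PowerSeries S :=
  PowerSeries.mk fun m =>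
    ∑ n ∈ Finset.range (m + 1), ((n.factorial : ℚ)⁻¹) • PowerSeries.coeff (R := S) m (f ^ n)

omit [Algebra ℚ S] in
/-- Product rule for the formal derivative over a finite set. -/
lemma derivFun_prod {ι : Type*} [DecidableEq ι] (s : Finset ι) (g : ι → S⟦X⟧) :
    d⁄dX S (∏ i ∈ s, g i) = ∑ i ∈ s, (∏ j ∈ s.erase i, g j) * d⁄dX S (g i) := by
  induction s using Finset.induction_on with
  | empty => simp
  | @insert a s ha ih =>
    rw [Finset.prod_insert ha, Derivation.leibniz, smul_eq_mul, smul_eq_mul, ih,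
      Finset.sum_insert ha, Finset.erase_insert ha, Finset.mul_sum]
    rw [add_comm]
    congr 1
    refine Finset.sum_congr rfl fun i hi => ?_
    have hia : a ≠ i := fun h => ha (h ▸ hi)
    rw [Finset.erase_insert_of_ne hia, Finset.prod_insert
      (fun h => ha (Finset.mem_of_mem_erase h))]
    ring

omit [Algebra ℚ S] in
/-- Derivative of a determinant: differentiate row by row. -/
lemma derivFun_det {n : ℕ} (M : Matrix (Fin n) (Fin n) S⟦X⟧) :
    d⁄dX S M.det = ∑ i, (M.updateRow i fun j => d⁄dX S (M i j)).det := by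
  simp only [Matrix.det_apply]
  rw [map_sum, Finset.sum_comm]
  refine Finset.sum_congr rfl fun σ _ => ?_
  have hz : ∀ (u : ℤˣ) (x : S⟦X⟧), d⁄dX S (u • x) = u • d⁄dX S x := by
    intro u x
    rw [Units.smul_def, Units.smul_def, ← Derivation.coeFn_coe, map_zsmul]
  rw [hz, derivFun_prod, Finset.smul_sum]
  refine Fintype.sum_equiv σ _ _ fun i => ?_
  have key : ∏ j, (M.updateRow (σ i) fun j' => d⁄dX S (M (σ i) j')) (σ j) j
      = d⁄dX S (M (σ i) i) * ∏ j ∈ Finset.univ.erase i, M (σ j) j := by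
    rw [← Finset.mul_prod_erase Finset.univ _ (Finset.mem_univ i)]
    congr 1
    · rw [Matrix.updateRow_self]
    · refine Finset.prod_congr rfl fun j hj => ?_
      rw [Matrix.updateRow_ne]
      exact fun hc => (Finset.mem_erase.mp hj).1 (σ.injective hc)
  rw [key]
  congr 1
  ring

omit [Algebra ℚ S] in
lemma coeff_pow_eq_zero' {f : S⟦X⟧} (hf : constantCoeff (R := S) f = 0) {m n : ℕ} (h : m < n) :
    coeff (R := S) m (f ^ n) = 0 :=
  X_pow_dvd_iff.mp (pow_dvd_pow_of_dvd (X_dvd_iff.mpr hf) n) m h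

lemma coeff_formalExp (f : S⟦X⟧) (q : ℕ) :
    coeff (R := S) q (formalExp f) =
      ∑ n ∈ Finset.range (q + 1), ((n.factorial : ℚ)⁻¹) • coeff (R := S) q (f ^ n) := by
  rw [formalExp, coeff_mk]

lemma formalExp_deriv (f : S⟦X⟧) (hf : constantCoeff (R := S) f = 0) :
    d⁄dX S (formalExp f) = d⁄dX S f * formalExp f := by
  ext m
  rw [coeff_derivative, coeff_formalExp, Finset.sum_mul]
  have hL : ∀ n ∈ Finset.range (m + 1 + 1),
      ((n.factorial : ℚ)⁻¹ • coeff (R := S) (m + 1) (f ^ n)) * ((m : S) + 1)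
        = (n.factorial : ℚ)⁻¹ • coeff (R := S) m (d⁄dX S (f ^ n)) := by
    intro n _
    rw [smul_mul_assoc]
    congr 1
    rw [coeff_derivative]
  rw [Finset.sum_congr rfl hL, Finset.sum_range_succ']
  have h0 : (Nat.factorial 0 : ℚ)⁻¹ • coeff (R := S) m (d⁄dX S (f ^ 0)) = 0 := by
    simp [Derivation.map_one_eq_zero]
  rw [h0, add_zero]
  have hL2 : ∀ j ∈ Finset.range (m + 1),
      ((j + 1).factorial : ℚ)⁻¹ • coeff (R := S) m (d⁄dX S (f ^ (j + 1)))
        = (j.factorial : ℚ)⁻¹ • coeff (R := S) m (f ^ j * d⁄dX S f) := by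
    intro j _
    rw [Derivation.leibniz_pow, Nat.add_sub_cancel, smul_eq_mul, map_nsmul,
      ← Nat.cast_smul_eq_nsmul ℚ, smul_smul, Nat.factorial_succ, Nat.cast_mul]
    congr 1
    push_cast
    rw [mul_inv, mul_comm ((j:ℚ)+1)⁻¹, mul_assoc,
      inv_mul_cancel₀ (by positivity : ((j:ℚ)+1) ≠ 0), mul_one]
  rw [Finset.sum_congr rfl hL2]
  rw [coeff_mul]
  have hR : ∀ p ∈ Finset.HasAntidiagonal.antidiagonal m,
      coeff (R := S) p.1 (d⁄dX S f) * coeff (R := S) p.2 (formalExp f)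
      = ∑ j ∈ Finset.range (m + 1),
          (j.factorial : ℚ)⁻¹ • (coeff (R := S) p.1 (d⁄dX S f) * coeff (R := S) p.2 (f ^ j)) := by
    intro p hp
    have hpm : p.2 ≤ m := by
      have := Finset.HasAntidiagonal.mem_antidiagonal.mp hp
      omega
    rw [coeff_formalExp]
    rw [Finset.sum_subset (Finset.range_subset_range.mpr (by omega : p.2 + 1 ≤ m + 1))
      (fun j _ hj => by
        rw [coeff_pow_eq_zero' hf (by simpa using hj : p.2 < j), smul_zero])]
    rw [Finset.mul_sum]
    exact Finset.sum_congr rfl fun j _ => (mul_smul_comm _ _ _)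
  rw [Finset.sum_congr rfl hR, Finset.sum_comm]
  refine Finset.sum_congr rfl fun j _ => ?_
  rw [← Finset.smul_sum, ← coeff_mul, mul_comm (f ^ j)]

/-- The power series inverse of `1 - X • A`: the matrix of `∑ₖ (Aᵏ)ᵢⱼ Xᵏ`. -/
noncomputable def Nmat {d : ℕ} (A : Matrix (Fin d) (Fin d) S) :
    Matrix (Fin d) (Fin d) S⟦X⟧ :=
  Matrix.of fun i j => mk fun k => (A ^ k) i j

omit [Algebra ℚ S] in
lemma Mmat_mul_Nmat {d : ℕ} (A : Matrix (Fin d) (Fin d) S) :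
    (1 - (X : S⟦X⟧) • A.map (C (R := S))) * Nmat A = 1 := by
  rw [Matrix.sub_mul, Matrix.one_mul, Matrix.smul_mul]
  ext i j k
  rw [Matrix.sub_apply, Matrix.smul_apply, smul_eq_mul] at *
  have hBN : ∀ k', coeff (R := S) k' ((A.map (C (R := S)) * Nmat A) i j) = (A ^ (k' + 1)) i j := by
    intro k'
    rw [Matrix.mul_apply, map_sum]
    rw [pow_succ', Matrix.mul_apply]
    refine Finset.sum_congr rfl fun l _ => ?_
    rw [Matrix.map_apply, Nmat, Matrix.of_apply, coeff_C_mul, coeff_mk]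
  cases k with
  | zero =>
    rw [map_sub, coeff_zero_X_mul, Nmat, Matrix.of_apply, coeff_mk, sub_zero, pow_zero]
    by_cases h : i = j
    · subst h; rw [Matrix.one_apply_eq, Matrix.one_apply_eq, coeff_zero_eq_constantCoeff,
        map_one]
    · rw [Matrix.one_apply_ne h, Matrix.one_apply_ne h, map_zero]
  | succ k =>
    rw [map_sub, coeff_succ_X_mul, hBN, Nmat, Matrix.of_apply, coeff_mk, sub_self]
    by_cases h : i = j
    · subst h; rw [Matrix.one_apply_eq, coeff_one, if_neg (Nat.succ_ne_zero k)]
    · rw [Matrix.one_apply_ne h, map_zero]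

omit [Algebra ℚ S] in
lemma trace_BN {d : ℕ} (A : Matrix (Fin d) (Fin d) S) :
    Matrix.trace (A.map (C (R := S)) * Nmat A) = mk fun k => Matrix.trace (A ^ (k + 1)) := by
  ext k
  rw [coeff_mk, Matrix.trace, Matrix.trace, map_sum]
  refine Finset.sum_congr rfl fun i _ => ?_
  rw [Matrix.diag_apply, Matrix.diag_apply, Matrix.mul_apply, map_sum, pow_succ',
    Matrix.mul_apply]
  refine Finset.sum_congr rfl fun l _ => ?_
  rw [Matrix.map_apply, Nmat, Matrix.of_apply, coeff_C_mul, coeff_mk]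

/-- For a square matrix `A` over a commutative `ℚ`-algebra, the formal
power series identity `exp (∑_{k≥1} tr(Aᵏ) tᵏ / k) = det(I − tA)⁻¹` holds, i.e.
`exp (∑_{k≥1} tr(Aᵏ) tᵏ / k) · det(I − tA) = 1`. -/
theorem stmt8 {d : ℕ} (A : Matrix (Fin d) (Fin d) S) :
    formalExp (PowerSeries.mk fun k =>
        if k = 0 then 0 else ((k : ℚ)⁻¹) • Matrix.trace (A ^ k)) *
      Matrix.det (1 - (PowerSeries.X : PowerSeries S) • A.map (PowerSeries.C (R := S))) = 1 := by
  set f : S⟦X⟧ := PowerSeries.mk fun k =>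
    if k = 0 then 0 else ((k : ℚ)⁻¹) • Matrix.trace (A ^ k) with hf_def
  set B : Matrix (Fin d) (Fin d) S⟦X⟧ := A.map (C (R := S)) with hB_def
  set M : Matrix (Fin d) (Fin d) S⟦X⟧ := 1 - (X : S⟦X⟧) • B with hM_def
  set T : S⟦X⟧ := mk fun k => Matrix.trace (A ^ (k + 1)) with hT_def
  have hf0 : constantCoeff (R := S) f = 0 := by
    rw [hf_def, ← coeff_zero_eq_constantCoeff, coeff_mk, if_pos rfl]
  -- derivative of f is T
  have hdf : d⁄dX S f = T := by
    ext k
    rw [coeff_derivative, hf_def, coeff_mk, hT_def, coeff_mk, if_neg (Nat.succ_ne_zero k)]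
    rw [smul_mul_assoc]
    have hc : Matrix.trace (A ^ (k + 1)) * ((k : S) + 1)
        = ((k : ℚ) + 1) • Matrix.trace (A ^ (k + 1)) := by
      rw [Algebra.smul_def, map_add, map_one, map_natCast, mul_comm]
    rw [hc, smul_smul]
    push_cast
    rw [inv_mul_cancel₀ (by positivity : ((k:ℚ)+1) ≠ 0), one_smul]
  -- derivative of the exponential
  have hdg : d⁄dX S (formalExp f) = T * formalExp f := by
    rw [formalExp_deriv f hf0, hdf]
  -- inverse matrix facts
  have hMN : M * Nmat A = 1 := Mmat_mul_Nmat A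
  have hNM : Nmat A * M = 1 := mul_eq_one_comm.mp hMN
  have hBNM : (B * Nmat A) * M = B := by
    rw [Matrix.mul_assoc, hNM, Matrix.mul_one]
  -- derivative of the determinant
  have hdD : d⁄dX S M.det = -(T * M.det) := by
    rw [derivFun_det]
    have hrow : ∀ i, (fun j => d⁄dX S (M i j)) = (-1 : S⟦X⟧) • (B i) := by
      intro i
      funext j
      rw [hM_def, Matrix.sub_apply, Matrix.smul_apply, smul_eq_mul, map_sub,
        Derivation.leibniz, derivative_X, smul_eq_mul, smul_eq_mul, mul_one]
      have h2 : d⁄dX S (B i j) = 0 := by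
        rw [hB_def, Matrix.map_apply]; exact derivative_C
      have h1 : d⁄dX S ((1 : Matrix (Fin d) (Fin d) S⟦X⟧) i j) = 0 := by
        by_cases h : i = j
        · subst h; rw [Matrix.one_apply_eq]; exact Derivation.map_one_eq_zero _
        · rw [Matrix.one_apply_ne h, map_zero]
      rw [h1, h2, mul_zero, zero_add, zero_sub, Pi.smul_apply, smul_eq_mul, neg_one_mul]
    have hterm : ∀ i, (M.updateRow i fun j => d⁄dX S (M i j)).det
        = -((B * Nmat A) i i * M.det) := by
      intro i
      rw [hrow i, Matrix.det_updateRow_smul, neg_one_mul, neg_inj.symm.mp rfl]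
      congr 1
      have hBi : (B i) = ∑ k, ((B * Nmat A) i k) • M k := by
        funext j
        rw [Finset.sum_apply]
        simp only [Pi.smul_apply, smul_eq_mul]
        rw [← Matrix.mul_apply, hBNM]
      rw [hBi, Matrix.det_updateRow_sum, smul_eq_mul]
    rw [Finset.sum_congr rfl fun i _ => hterm i, Finset.sum_neg_distrib, ← Finset.sum_mul]
    congr 2
    rw [hT_def, ← trace_BN A, Matrix.trace]
    rfl
  -- the product has zero derivative
  have hP : d⁄dX S (formalExp f * M.det) = 0 := by
    rw [Derivation.leibniz, smul_eq_mul, smul_eq_mul, hdg, hdD]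
    ring
  -- constant coefficients
  have hg0 : constantCoeff (R := S) (formalExp f) = 1 := by
    rw [← coeff_zero_eq_constantCoeff, coeff_formalExp]
    simp
  have hD0 : constantCoeff (R := S) M.det = 1 := by
    rw [RingHom.map_det]
    have : M.map (constantCoeff (R := S)) = 1 := by
      ext i j
      rw [Matrix.map_apply, hM_def, Matrix.sub_apply, Matrix.smul_apply, smul_eq_mul,
        map_sub, map_mul, constantCoeff_X, zero_mul, sub_zero]
      by_cases h : i = j
      · subst h; rw [Matrix.one_apply_eq, Matrix.one_apply_eq, map_one]
      · rw [Matrix.one_apply_ne h, Matrix.one_apply_ne h, map_zero]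
    rw [RingHom.mapMatrix_apply, this, Matrix.det_one]
  -- conclude
  apply PowerSeries.ext
  intro n
  cases n with
  | zero =>
    rw [coeff_zero_eq_constantCoeff, map_mul, hg0, hD0, one_mul, map_one]
  | succ n =>
    have h0 : coeff (R := S) n (d⁄dX S (formalExp f * M.det)) = 0 := by rw [hP, map_zero]
    rw [coeff_derivative] at h0
    have h1 := congrArg (fun y => ((n : ℚ) + 1)⁻¹ • y) h0
    simp only [smul_zero] at h1
    have hc : ((n : S) + 1) = algebraMap ℚ S ((n : ℚ) + 1) := by
      rw [map_add, map_one, map_natCast]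
    rw [← mul_smul_comm, hc, Algebra.smul_def, ← map_mul,
      inv_mul_cancel₀ (by positivity : ((n:ℚ)+1) ≠ 0), map_one, mul_one] at h1
    rw [h1, coeff_one, if_neg (Nat.succ_ne_zero n)]
end

section
/- Let C_* be a chain complex over a ring R with a good filtration 0 = C_*^{(-1)} ⊆ C_*^{(0)} ⊆ ... with ∪ C_*^{(i)} = C_*, and let D_* be a free chain complex with the trivial filtration. Given a chain map φ : D_* → C_*^{gr} to the adjoint complex, there exists a filtration-preserving chain map f : D_* → C_* inducing φ on adjoint complexes, and f is unique up to a filtration-preserving chain homotopy. -/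
open CategoryTheory

variable {R : Type} [Ring R]

/-- A filtration `0 = C^{(-1)} ⊆ C^{(0)} ⊆ C^{(1)} ⊆ ⋯` of a chain complex by
subcomplexes, with `∪ᵢ C^{(i)} = C`. -/
structure ComplexFiltration (C : ChainComplex (ModuleCat R) ℕ) where
  F : ℕ → ∀ n, Submodule R (C.X n)
  mono : ∀ i n, F i n ≤ F (i + 1) n
  exhaust : ∀ n, ⨆ i, F i n = ⊤
  dstab : ∀ i n x, x ∈ F i (n + 1) → C.d (n + 1) n x ∈ F i n

namespace ComplexFiltration

variable {C : ChainComplex (ModuleCat R) ℕ} (Fl : ComplexFiltration C)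

/-- The shifted filtration, `Fprev i = C^{(i-1)}` (with `C^{(-1)} = 0`). -/
def Fprev : ℕ → ∀ n, Submodule R (C.X n)
  | 0 => fun _ => ⊥
  | i + 1 => Fl.F i

/-- The filtration is *good*: `H_k(C^{(i)}/C^{(i-1)}) = 0` for `k ≠ i`; concretely, every
relative `k`-cycle of `C^{(i)}/C^{(i-1)}` with `k ≠ i` is a relative boundary. -/
def IsGood : Prop :=
  ∀ i k, k ≠ i → ∀ x ∈ Fl.F i k, C.d k (k - 1) x ∈ Fl.Fprev i (k - 1) →
    ∃ y ∈ Fl.F i (k + 1), x - C.d (k + 1) k y ∈ Fl.Fprev i k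

/-- Relative `n`-cycles of `C^{(n)}/C^{(n-1)}`. -/
def Z (n : ℕ) : Submodule R (C.X n) :=
  Fl.F n n ⊓ Submodule.comap (C.d n (n - 1)).hom (Fl.Fprev n (n - 1))

/-- Relative `n`-boundaries of `C^{(n)}/C^{(n-1)}` (inside the cycles). -/
def B (n : ℕ) : Submodule R (C.X n) :=
  (Submodule.map (C.d (n + 1) n).hom (Fl.F n (n + 1)) ⊔ Fl.Fprev n n) ⊓ Fl.Z n

/-- The `n`-th term `C_n^{gr} = H_n(C^{(n)}/C^{(n-1)})` of the adjoint complex. -/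
def gr (n : ℕ) := Fl.Z n ⧸ (Fl.B n).comap (Fl.Z n).subtype

noncomputable instance (n : ℕ) : AddCommGroup (Fl.gr n) := by
  unfold gr; infer_instance

noncomputable instance (n : ℕ) : Module R (Fl.gr n) := by
  unfold gr; infer_instance

theorem d_mem_Z {n : ℕ} {x : C.X (n + 1)} (hx : x ∈ Fl.Z (n + 1)) :
    C.d (n + 1) n x ∈ Fl.Z n := by
  refine ⟨hx.2, ?_⟩
  have h0 : C.d n (n - 1) (C.d (n + 1) n x) = 0 := by
    rcases n with _ | m
    · have : C.d 0 (0 - 1) = 0 := C.shape 0 0 (by simp [ComplexShape.down])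
      rw [this]; rfl
    · exact DFunLike.congr_fun (congrArg ModuleCat.Hom.hom (C.d_comp_d (m + 2) (m + 1) m)) x
  have : C.d n (n - 1) (C.d (n + 1) n x) ∈ Fl.Fprev n (n - 1) := by
    rw [h0]; exact Submodule.zero_mem _
  exact this

/-- The differential `Z(n+1) → Z(n)`. -/
noncomputable def dZ (n : ℕ) : Fl.Z (n + 1) →ₗ[R] Fl.Z n :=
  LinearMap.restrict (C.d (n + 1) n).hom (fun _ hx => Fl.d_mem_Z hx)

theorem dZ_B {n : ℕ} (x : Fl.Z (n + 1)) (hx : (x : C.X (n + 1)) ∈ Fl.B (n + 1)) :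
    (Fl.dZ n x : C.X n) ∈ Fl.B n := by
  rw [B, Submodule.mem_inf] at hx
  obtain ⟨hmem, hZx⟩ := hx
  rw [Submodule.mem_sup] at hmem
  obtain ⟨a, ha, b, hb, hab⟩ := hmem
  obtain ⟨y, hy, rfl⟩ := ha
  have hda : C.d (n + 1) n (C.d (n + 1 + 1) (n + 1) y) = 0 :=
    DFunLike.congr_fun (congrArg ModuleCat.Hom.hom (C.d_comp_d (n + 1 + 1) (n + 1) n)) y
  rw [B, Submodule.mem_inf]
  constructor
  · apply Submodule.mem_sup_left
    refine ⟨b, hb, ?_⟩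
    have h1 : C.d (n + 1) n ((x : C.X (n + 1))) = C.d (n + 1) n b := by
      rw [← hab, map_add, hda, zero_add]
    exact h1.symm
  · exact Fl.d_mem_Z x.2

/-- The boundary operator of the adjoint complex `C^{gr}`, induced by `d`. -/
noncomputable def grD (n : ℕ) : Fl.gr (n + 1) →ₗ[R] Fl.gr n :=
  Submodule.mapQ _ _ (Fl.dZ n) (fun x hx => Fl.dZ_B x hx)

end ComplexFiltration

open ComplexFiltration

section MyAux
variable {C : ChainComplex (ModuleCat R) ℕ} (Fl : ComplexFiltration C)

lemma myF_mono {i j : ℕ} (h : i ≤ j) (n : ℕ) : Fl.F i n ≤ Fl.F j n := by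
  induction h with
  | refl => exact le_rfl
  | step h ih => exact ih.trans (Fl.mono _ n)

lemma myFprev_le (i n : ℕ) : Fl.Fprev i n ≤ Fl.F i n := by
  cases i with
  | zero => exact bot_le
  | succ m => exact Fl.mono m n

lemma mydd (E : ChainComplex (ModuleCat R) ℕ) (n : ℕ) (x : E.X (n + 1)) :
    E.d n (n - 1) (E.d (n + 1) n x) = 0 := by
  cases n with
  | zero =>
    have : E.d 0 (0 - 1) = 0 := E.shape 0 0 (by simp [ComplexShape.down])
    rw [this]; rfl
  | succ m => exact DFunLike.congr_fun (congrArg ModuleCat.Hom.hom (E.d_comp_d (m + 2) (m + 1) m)) x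

lemma myLemA (hGood : Fl.IsGood) :
    ∀ j k, j < k → ∀ b ∈ Fl.F j k, C.d k (k - 1) b = 0 →
      ∃ Y ∈ Fl.F j (k + 1), b = C.d (k + 1) k Y := by
  intro j
  induction j with
  | zero =>
    intro k hk b hb hdb
    obtain ⟨y, hy, hby⟩ := hGood 0 k hk.ne' b hb
      (by rw [hdb]; exact Submodule.zero_mem _)
    refine ⟨y, hy, ?_⟩
    have h0 : b - C.d (k + 1) k y = 0 := hby
    exact sub_eq_zero.mp h0
  | succ m ih =>
    intro k hk b hb hdb
    obtain ⟨y, hy, hby⟩ := hGood (m + 1) k hk.ne' b hb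
      (by rw [hdb]; exact Submodule.zero_mem _)
    have hby' : b - C.d (k + 1) k y ∈ Fl.F m k := hby
    have hd2 : C.d k (k - 1) (b - C.d (k + 1) k y) = 0 := by
      rw [map_sub, hdb, mydd C k y, sub_zero]
    obtain ⟨Y', hY', hbY'⟩ := ih k ((Nat.le_succ m).trans_lt hk) _ hby' hd2
    refine ⟨y + Y', add_mem hy (Fl.mono m (k + 1) hY'), ?_⟩
    rw [map_add, ← hbY']; abel

lemma myB_dec {n : ℕ} {x : C.X n} (hx : x ∈ Fl.B n) :
    ∃ w ∈ Fl.F n (n + 1), x - C.d (n + 1) n w ∈ Fl.Fprev n n := by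
  rw [ComplexFiltration.B, Submodule.mem_inf] at hx
  obtain ⟨hmem, -⟩ := hx
  rw [Submodule.mem_sup] at hmem
  obtain ⟨a, ha, b, hb, hab⟩ := hmem
  obtain ⟨w, hw, rfl⟩ := ha
  exact ⟨w, hw, by rw [← hab]; simpa using hb⟩

lemma mymem_Z {n : ℕ} {x : C.X n} (h1 : x ∈ Fl.F n n)
    (h2 : C.d n (n - 1) x ∈ Fl.Fprev n (n - 1)) : x ∈ Fl.Z n := ⟨h1, h2⟩

end MyAux

section MyEx
variable {C : ChainComplex (ModuleCat R) ℕ} (Fl : ComplexFiltration C)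
variable {D : ChainComplex (ModuleCat R) ℕ}

lemma mycommh (f : D ⟶ C) (n : ℕ) (x : D.X (n + 1)) :
    C.d (n + 1) n (f.f (n + 1) x) = f.f n (D.d (n + 1) n x) :=
  DFunLike.congr_fun (congrArg ModuleCat.Hom.hom (f.comm' (n + 1) n rfl)) x

lemma mygrD_mk (n : ℕ) (z : Fl.Z (n + 1)) :
    Fl.grD n (Submodule.Quotient.mk z) = (Submodule.Quotient.mk (Fl.dZ n z) : Fl.gr n) :=
  Submodule.mapQ_apply _ _ _ z

lemma myex_step_pt (hGood : Fl.IsGood)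
    (φ : ∀ n, D.X n →ₗ[R] Fl.gr n)
    (hφ : ∀ n (x : D.X (n + 1)), Fl.grD n (φ (n + 1) x) = φ n (D.d (n + 1) n x))
    (n : ℕ) (fn : D.X n →ₗ[R] C.X n)
    (hZ : ∀ x, fn x ∈ Fl.Z n)
    (hφn : ∀ x, (Submodule.Quotient.mk (LinearMap.codRestrict (Fl.Z n) fn hZ x) : Fl.gr n) = φ n x)
    (hker : ∀ x, D.d n (n - 1) x = 0 → C.d n (n - 1) (fn x) = 0)
    (e : D.X (n + 1)) :
    ∃ z : Fl.Z (n + 1), (Submodule.Quotient.mk z : Fl.gr (n + 1)) = φ (n + 1) e ∧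
      C.d (n + 1) n z = fn (D.d (n + 1) n e) := by
  obtain ⟨z0, hz0⟩ := Submodule.Quotient.mk_surjective _ (φ (n + 1) e)
  -- the image of d z0 in gr n agrees with the class of fn (d e)
  have h1 : (Submodule.Quotient.mk (Fl.dZ n z0) : Fl.gr n)
      = Submodule.Quotient.mk (LinearMap.codRestrict (Fl.Z n) fn hZ (D.d (n + 1) n e)) := by
    rw [← mygrD_mk, hz0, hφ n e, hφn]
  have h2 : (C.d (n + 1) n (z0 : C.X (n + 1)) - fn (D.d (n + 1) n e)) ∈ Fl.B n := by
    have := (Submodule.Quotient.eq _).mp h1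
    exact this
  obtain ⟨w, hw, hbmem⟩ := myB_dec Fl h2
  set b : C.X n := (C.d (n + 1) n (z0 : C.X (n + 1)) - fn (D.d (n + 1) n e)) - C.d (n + 1) n w with hbdef
  have hdfe : C.d n (n - 1) (fn (D.d (n + 1) n e)) = 0 :=
    hker _ (mydd D n e)
  have hdb : C.d n (n - 1) b = 0 := by
    rw [hbdef, map_sub, map_sub, hdfe, mydd C n z0, mydd C n w]; abel
  -- find Y with b = d Y, Y ∈ F n (n+1)
  have hY : ∃ Y ∈ Fl.F n (n + 1), b = C.d (n + 1) n Y := by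
    cases n with
    | zero =>
      have hb0 : b = 0 := hbmem
      exact ⟨0, Submodule.zero_mem _, by rw [hb0, map_zero]⟩
    | succ m =>
      obtain ⟨Y, hY, hbY⟩ := myLemA Fl hGood m (m + 1) (Nat.lt_succ_self m) b hbmem hdb
      exact ⟨Y, Fl.mono m (m + 2) hY, hbY⟩
  obtain ⟨Y, hYmem, hbY⟩ := hY
  -- the corrected lift
  have hz0F : (z0 : C.X (n + 1)) ∈ Fl.F (n + 1) (n + 1) := z0.2.1
  have hz0d : C.d (n + 1) n (z0 : C.X (n + 1)) ∈ Fl.F n n := z0.2.2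
  have hwY : w + Y ∈ Fl.F n (n + 1) := add_mem hw hYmem
  have hdwY : C.d (n + 1) n (w + Y) =
      C.d (n + 1) n (z0 : C.X (n + 1)) - fn (D.d (n + 1) n e) := by
    rw [map_add, ← hbY, hbdef]; abel
  have hzval : ((z0 : C.X (n + 1)) - (w + Y)) ∈ Fl.Z (n + 1) := by
    refine ⟨sub_mem hz0F (myF_mono Fl (Nat.le_succ n) (n + 1) hwY), ?_⟩
    show C.d (n + 1) n _ ∈ Fl.F n n
    rw [map_sub, hdwY]
    have : C.d (n+1) n (z0 : C.X (n+1)) - (C.d (n+1) n (z0 : C.X (n+1)) - fn (D.d (n + 1) n e)) = fn (D.d (n + 1) n e) := by abel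
    rw [this]
    exact (hZ _).1
  refine ⟨⟨_, hzval⟩, ?_, ?_⟩
  · rw [← hz0]
    rw [Submodule.Quotient.eq]
    show ((z0 : C.X (n+1)) - (w + Y)) - (z0 : C.X (n+1)) ∈ Fl.B (n + 1)
    have hmm : ((z0 : C.X (n+1)) - (w + Y)) - (z0 : C.X (n+1)) = -(w + Y) := by abel
    rw [hmm]
    refine neg_mem ?_
    refine ⟨Submodule.mem_sup_right hwY, ?_⟩
    refine ⟨myF_mono Fl (Nat.le_succ n) (n + 1) hwY, ?_⟩
    show C.d (n + 1) n (w + Y) ∈ Fl.F n n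
    rw [hdwY]
    exact sub_mem hz0d (hZ _).1
  · show C.d (n + 1) n ((z0 : C.X (n+1)) - (w + Y)) = _
    rw [map_sub, hdwY]; abel

end MyEx

section MyEx2
variable {C : ChainComplex (ModuleCat R) ℕ} (Fl : ComplexFiltration C)
variable {D : ChainComplex (ModuleCat R) ℕ}

lemma myex_step (hGood : Fl.IsGood)
    (φ : ∀ n, D.X n →ₗ[R] Fl.gr n)
    (hφ : ∀ n (x : D.X (n + 1)), Fl.grD n (φ (n + 1) x) = φ n (D.d (n + 1) n x))
    (n : ℕ) (hfree : Module.Free R (D.X (n + 1)))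
    (fn : D.X n →ₗ[R] C.X n)
    (hZ : ∀ x, fn x ∈ Fl.Z n)
    (hφn : ∀ x, (Submodule.Quotient.mk (LinearMap.codRestrict (Fl.Z n) fn hZ x) : Fl.gr n) = φ n x)
    (hker : ∀ x, D.d n (n - 1) x = 0 → C.d n (n - 1) (fn x) = 0) :
    ∃ f' : D.X (n + 1) →ₗ[R] C.X (n + 1), ∃ hZ' : ∀ x, f' x ∈ Fl.Z (n + 1),
      (∀ x, (Submodule.Quotient.mk (LinearMap.codRestrict (Fl.Z (n + 1)) f' hZ' x) :
          Fl.gr (n + 1)) = φ (n + 1) x) ∧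
      (∀ x, C.d (n + 1) n (f' x) = fn (D.d (n + 1) n x)) := by
  haveI := hfree
  let bb := Module.Free.chooseBasis R (D.X (n + 1))
  have spec := fun i => (myex_step_pt Fl hGood φ hφ n fn hZ hφn hker (bb i)).choose_spec
  let g : D.X (n + 1) →ₗ[R] Fl.Z (n + 1) :=
    bb.constr ℕ (fun i => (myex_step_pt Fl hGood φ hφ n fn hZ hφn hker (bb i)).choose)
  have hgb : ∀ i, g (bb i) = (myex_step_pt Fl hGood φ hφ n fn hZ hφn hker (bb i)).choose :=
    fun i => bb.constr_basis ℕ _ i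
  refine ⟨(Fl.Z (n + 1)).subtype ∘ₗ g, fun x => (g x).2, ?_, ?_⟩
  · have hmaps : ((Fl.B (n + 1)).comap (Fl.Z (n + 1)).subtype).mkQ ∘ₗ g = φ (n + 1) := by
      apply bb.ext
      intro i
      rw [LinearMap.comp_apply, hgb i, Submodule.mkQ_apply]
      exact (spec i).1
    intro x
    have h1 : LinearMap.codRestrict (Fl.Z (n + 1)) ((Fl.Z (n + 1)).subtype ∘ₗ g)
        (fun x => (g x).2) x = g x := rfl
    rw [h1]
    exact DFunLike.congr_fun hmaps x
  · have hc : (C.d (n + 1) n).hom ∘ₗ ((Fl.Z (n + 1)).subtype ∘ₗ g)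
        = fn ∘ₗ (D.d (n + 1) n).hom := by
      apply bb.ext
      intro i
      simp only [LinearMap.comp_apply, Submodule.subtype_apply]
      rw [hgb i]
      exact (spec i).2
    intro x
    exact DFunLike.congr_fun hc x

lemma myex_base (φ : ∀ n, D.X n →ₗ[R] Fl.gr n) (hfree : Module.Free R (D.X 0)) :
    ∃ f0 : D.X 0 →ₗ[R] C.X 0, ∃ hZ : ∀ x, f0 x ∈ Fl.Z 0,
      ∀ x, (Submodule.Quotient.mk (LinearMap.codRestrict (Fl.Z 0) f0 hZ x) : Fl.gr 0)
        = φ 0 x := by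
  haveI := hfree
  let bb := Module.Free.chooseBasis R (D.X 0)
  have spec := fun i => (Submodule.Quotient.mk_surjective
    ((Fl.B 0).comap (Fl.Z 0).subtype) (φ 0 (bb i))).choose_spec
  let g : D.X 0 →ₗ[R] Fl.Z 0 :=
    bb.constr ℕ (fun i => (Submodule.Quotient.mk_surjective
      ((Fl.B 0).comap (Fl.Z 0).subtype) (φ 0 (bb i))).choose)
  have hgb : ∀ i, g (bb i) = (Submodule.Quotient.mk_surjective
      ((Fl.B 0).comap (Fl.Z 0).subtype) (φ 0 (bb i))).choose := fun i => bb.constr_basis ℕ _ i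
  refine ⟨(Fl.Z 0).subtype ∘ₗ g, fun x => (g x).2, ?_⟩
  have hmaps : ((Fl.B 0).comap (Fl.Z 0).subtype).mkQ ∘ₗ g = φ 0 := by
    apply bb.ext
    intro i
    rw [LinearMap.comp_apply, hgb i, Submodule.mkQ_apply]
    exact spec i
  intro x
  have h1 : LinearMap.codRestrict (Fl.Z 0) ((Fl.Z 0).subtype ∘ₗ g)
      (fun x => (g x).2) x = g x := rfl
  rw [h1]
  exact DFunLike.congr_fun hmaps x

lemma myexists_f (hGood : Fl.IsGood) (hDfree : ∀ n, Module.Free R (D.X n))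
    (φ : ∀ n, D.X n →ₗ[R] Fl.gr n)
    (hφ : ∀ n (x : D.X (n + 1)), Fl.grD n (φ (n + 1) x) = φ n (D.d (n + 1) n x)) :
    ∃ (f : ∀ n, D.X n →ₗ[R] C.X n) (hZ : ∀ n x, f n x ∈ Fl.Z n),
      (∀ n x, (Submodule.Quotient.mk (LinearMap.codRestrict (Fl.Z n) (f n) (hZ n) x) :
          Fl.gr n) = φ n x) ∧
      (∀ n x, C.d (n + 1) n (f (n + 1) x) = f n (D.d (n + 1) n x)) := by
  let T : ℕ → Type _ := fun n => { fn : D.X n →ₗ[R] C.X n //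
    ∃ hZ : ∀ x, fn x ∈ Fl.Z n,
      (∀ x, (Submodule.Quotient.mk (LinearMap.codRestrict (Fl.Z n) fn hZ x) : Fl.gr n)
        = φ n x) ∧
      (∀ x, D.d n (n - 1) x = 0 → C.d n (n - 1) (fn x) = 0) }
  have hstep0 : ∀ n (p : T n), ∃ q : T (n + 1),
      ∀ x, C.d (n + 1) n (q.1 x) = p.1 (D.d (n + 1) n x) := by
    rintro n ⟨fn, hZ, hφn, hker⟩
    obtain ⟨f', hZ', hφ', hcomm⟩ := myex_step Fl hGood φ hφ n (hDfree (n + 1)) fn hZ hφn hker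
    exact ⟨⟨f', hZ', hφ', fun x hx => by
      have hx' : D.d (n + 1) n x = 0 := hx
      show C.d (n + 1) n (f' x) = 0
      rw [hcomm x, hx', map_zero]⟩, hcomm⟩
  choose step hstep using hstep0
  obtain ⟨f0, hZ0, hφ0⟩ := myex_base Fl φ (hDfree 0)
  have hker0 : ∀ x : D.X 0, D.d 0 (0 - 1) x = 0 → C.d 0 (0 - 1) (f0 x) = 0 := by
    intro x _
    have : C.d 0 (0 - 1) = 0 := C.shape 0 0 (by simp [ComplexShape.down])
    rw [this]; rfl
  let seq : ∀ n, T n := fun n => Nat.rec (motive := T) ⟨f0, hZ0, hφ0, hker0⟩ step n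
  have hcomm : ∀ n x, C.d (n + 1) n ((seq (n + 1)).1 x) = (seq n).1 (D.d (n + 1) n x) :=
    fun n => hstep n (seq n)
  refine ⟨fun n => (seq n).1, fun n => (seq n).2.choose,
    fun n => (seq n).2.choose_spec.1, hcomm⟩

end MyEx2

section MyUn
variable {C : ChainComplex (ModuleCat R) ℕ} (Fl : ComplexFiltration C)
variable {D : ChainComplex (ModuleCat R) ℕ}

lemma myun_step_pt (hGood : Fl.IsGood) (f g : D ⟶ C)
    (hsub : ∀ n x, f.f n x - g.f n x ∈ Fl.B n)
    (n : ℕ) (sn : D.X n →ₗ[R] C.X (n + 1))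
    (hmem : ∀ x, sn x ∈ Fl.F n (n + 1))
    (hker : ∀ y, D.d n (n - 1) y = 0 →
      C.d (n + 1) n (sn y) = f.f n y - g.f n y)
    (e : D.X (n + 1)) :
    ∃ v ∈ Fl.F (n + 1) (n + 2), C.d (n + 2) (n + 1) v
      = (f.f (n + 1) e - g.f (n + 1) e) - sn (D.d (n + 1) n e) := by
  obtain ⟨w, hw, hbmem⟩ := myB_dec Fl (hsub (n + 1) e)
  have hbmem' : (f.f (n + 1) e - g.f (n + 1) e) - C.d (n + 2) (n + 1) w ∈ Fl.F n (n + 1) :=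
    hbmem
  set c := ((f.f (n + 1) e - g.f (n + 1) e) - C.d (n + 2) (n + 1) w)
      - sn (D.d (n + 1) n e) with hc
  have hcF : c ∈ Fl.F n (n + 1) := sub_mem hbmem' (hmem _)
  have hdh : C.d (n + 1) n (f.f (n + 1) e - g.f (n + 1) e)
      = f.f n (D.d (n + 1) n e) - g.f n (D.d (n + 1) n e) := by
    rw [map_sub, mycommh f n e, mycommh g n e]
  have hdsn : C.d (n + 1) n (sn (D.d (n + 1) n e))
      = f.f n (D.d (n + 1) n e) - g.f n (D.d (n + 1) n e) :=
    hker _ (mydd D n e)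
  have hddw : C.d (n + 1) n (C.d (n + 2) (n + 1) w) = 0 := mydd C (n + 1) w
  have hdc : C.d (n + 1) n c = 0 := by
    rw [hc, map_sub, map_sub, hdh, hdsn, hddw]; abel
  obtain ⟨Y, hY, hcY⟩ := myLemA Fl hGood n (n + 1) (Nat.lt_succ_self n) c hcF hdc
  refine ⟨w + Y, add_mem hw (myF_mono Fl (Nat.le_succ n) (n + 2) hY), ?_⟩
  rw [map_add, ← hcY, hc]; abel

lemma myun_base_pt (f g : D ⟶ C)
    (hsub : ∀ n x, f.f n x - g.f n x ∈ Fl.B n) (e : D.X 0) :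
    ∃ v ∈ Fl.F 0 1, C.d 1 0 v = f.f 0 e - g.f 0 e := by
  obtain ⟨w, hw, hbmem⟩ := myB_dec Fl (hsub 0 e)
  have h0 : (f.f 0 e - g.f 0 e) - C.d 1 0 w = 0 := hbmem
  exact ⟨w, hw, (sub_eq_zero.mp h0).symm⟩

lemma myexists_s (hGood : Fl.IsGood) (hDfree : ∀ n, Module.Free R (D.X n))
    (f g : D ⟶ C) (hsub : ∀ n x, f.f n x - g.f n x ∈ Fl.B n) :
    ∃ s : ∀ n, D.X n →ₗ[R] C.X (n + 1),
      (∀ n x, s n x ∈ Fl.F n (n + 1)) ∧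
      (∀ x, f.f 0 x - g.f 0 x = C.d 1 0 (s 0 x)) ∧
      (∀ n (x : D.X (n + 1)), f.f (n + 1) x - g.f (n + 1) x =
        C.d (n + 2) (n + 1) (s (n + 1) x) + s n (D.d (n + 1) n x)) := by
  let T : ℕ → Type _ := fun n => { sn : D.X n →ₗ[R] C.X (n + 1) //
    (∀ x, sn x ∈ Fl.F n (n + 1)) ∧
    (∀ y, D.d n (n - 1) y = 0 → C.d (n + 1) n (sn y) = f.f n y - g.f n y) }
  -- base
  have hbase : ∃ p : T 0, ∀ x, C.d 1 0 (p.1 x) = f.f 0 x - g.f 0 x := by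
    haveI := hDfree 0
    let bb := Module.Free.chooseBasis R (D.X 0)
    have spec := fun i => (myun_base_pt Fl f g hsub (bb i)).choose_spec
    let g0 : D.X 0 →ₗ[R] Fl.F 0 1 := bb.constr ℕ
      (fun i => ⟨(myun_base_pt Fl f g hsub (bb i)).choose, (spec i).1⟩)
    have hgb : ∀ i, (g0 (bb i) : C.X 1) = (myun_base_pt Fl f g hsub (bb i)).choose :=
      fun i => congrArg Subtype.val (bb.constr_basis ℕ _ i)
    have hfull : (C.d 1 0).hom ∘ₗ ((Fl.F 0 1).subtype ∘ₗ g0)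
        = ((f.f 0).hom - (g.f 0).hom : D.X 0 →ₗ[R] C.X 0) := by
      apply bb.ext
      intro i
      simp only [LinearMap.comp_apply, Submodule.subtype_apply, LinearMap.sub_apply]
      rw [hgb i]
      exact (spec i).2
    refine ⟨⟨(Fl.F 0 1).subtype ∘ₗ g0, fun x => (g0 x).2, ?_⟩, ?_⟩
    · intro y _
      exact DFunLike.congr_fun hfull y
    · intro x
      exact DFunLike.congr_fun hfull x
  -- step
  have hstep0 : ∀ n (p : T n), ∃ q : T (n + 1),
      ∀ x, C.d (n + 2) (n + 1) (q.1 x)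
        = (f.f (n + 1) x - g.f (n + 1) x) - p.1 (D.d (n + 1) n x) := by
    rintro n ⟨sn, hmem, hker⟩
    haveI := hDfree (n + 1)
    let bb := Module.Free.chooseBasis R (D.X (n + 1))
    have spec := fun i => (myun_step_pt Fl hGood f g hsub n sn hmem hker (bb i)).choose_spec
    let g1 : D.X (n + 1) →ₗ[R] Fl.F (n + 1) (n + 2) := bb.constr ℕ
      (fun i => ⟨(myun_step_pt Fl hGood f g hsub n sn hmem hker (bb i)).choose, (spec i).1⟩)
    have hgb : ∀ i, (g1 (bb i) : C.X (n + 2))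
        = (myun_step_pt Fl hGood f g hsub n sn hmem hker (bb i)).choose :=
      fun i => congrArg Subtype.val (bb.constr_basis ℕ _ i)
    have hfull : (C.d (n + 2) (n + 1)).hom ∘ₗ
        ((Fl.F (n + 1) (n + 2)).subtype ∘ₗ g1)
        = ((f.f (n + 1)).hom - (g.f (n + 1)).hom : D.X (n + 1) →ₗ[R] C.X (n + 1))
          - sn ∘ₗ (D.d (n + 1) n).hom := by
      apply bb.ext
      intro i
      simp only [LinearMap.comp_apply, Submodule.subtype_apply, LinearMap.sub_apply]
      rw [hgb i]
      exact (spec i).2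
    have hfull' : ∀ x, C.d (n + 2) (n + 1) (((Fl.F (n + 1) (n + 2)).subtype ∘ₗ g1) x)
        = (f.f (n + 1) x - g.f (n + 1) x) - sn (D.d (n + 1) n x) :=
      fun x => DFunLike.congr_fun hfull x
    refine ⟨⟨(Fl.F (n + 1) (n + 2)).subtype ∘ₗ g1, fun x => (g1 x).2, ?_⟩, hfull'⟩
    intro y hy
    have hy' : D.d (n + 1) n y = 0 := hy
    show C.d (n + 2) (n + 1) _ = _
    rw [hfull' y, hy', map_zero, sub_zero]
  choose step hstep using hstep0
  obtain ⟨p0, hp0⟩ := hbase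
  let seq : ∀ n, T n := fun n => Nat.rec (motive := T) p0 step n
  have hcomm : ∀ n x, C.d (n + 2) (n + 1) ((seq (n + 1)).1 x)
      = (f.f (n + 1) x - g.f (n + 1) x) - (seq n).1 (D.d (n + 1) n x) :=
    fun n => hstep n (seq n)
  refine ⟨fun n => (seq n).1, fun n => (seq n).2.1, fun x => (hp0 x).symm, ?_⟩
  intro n x
  rw [hcomm n x]; abel

end MyUn
/-- Let `C` be a chain complex over `R` with a good filtration
`0 = C^{(-1)} ⊆ C^{(0)} ⊆ ⋯`, `∪ᵢ C^{(i)} = C`, and let `D` be a free chain complex with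
the trivial filtration.  Given a chain map `φ : D → C^{gr}` to the adjoint complex, there
is a filtration-preserving chain map `f : D ⟶ C` inducing `φ` on adjoint complexes, and
`f` is unique up to a filtration-preserving chain homotopy. -/
theorem stmt17 (C : ChainComplex (ModuleCat R) ℕ) (Fl : ComplexFiltration C)
    (hGood : Fl.IsGood)
    (D : ChainComplex (ModuleCat R) ℕ) (hDfree : ∀ n, Module.Free R (D.X n))
    -- a chain map `φ : D → C^{gr}` (the adjoint of the trivial filtration on `D` is `D`)
    (φ : ∀ n, D.X n →ₗ[R] Fl.gr n)
    (hφ : ∀ n (x : D.X (n + 1)), Fl.grD n (φ (n + 1) x) = φ n (D.d (n + 1) n x)) :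
    -- existence of a filtration-preserving `f` inducing `φ`
    (∃ (f : D ⟶ C) (hmem : ∀ n x, f.f n x ∈ Fl.Z n),
      ∀ n (x : D.X n),
        Submodule.Quotient.mk (LinearMap.codRestrict (Fl.Z n) (f.f n).hom (hmem n) x)
          = φ n x) ∧
    -- uniqueness up to a filtration-preserving chain homotopy
    (∀ (f g : D ⟶ C) (hf : ∀ n x, f.f n x ∈ Fl.Z n) (hg : ∀ n x, g.f n x ∈ Fl.Z n),
      (∀ n (x : D.X n),
        Submodule.Quotient.mk (LinearMap.codRestrict (Fl.Z n) (f.f n).hom (hf n) x) = φ n x) →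
      (∀ n (x : D.X n),
        Submodule.Quotient.mk (LinearMap.codRestrict (Fl.Z n) (g.f n).hom (hg n) x) = φ n x) →
      ∃ s : ∀ n, D.X n →ₗ[R] C.X (n + 1),
        (∀ n x, s n x ∈ Fl.F n (n + 1)) ∧
        (∀ x, f.f 0 x - g.f 0 x = C.d 1 0 (s 0 x)) ∧
        (∀ n (x : D.X (n + 1)), f.f (n + 1) x - g.f (n + 1) x =
          C.d (n + 2) (n + 1) (s (n + 1) x) + s n (D.d (n + 1) n x))) := by
  constructor
  · obtain ⟨fseq, hZ, hφseq, hcomm⟩ := myexists_f Fl hGood hDfree φ hφ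
    refine ⟨{ f := fun n => ModuleCat.ofHom (fseq n), comm' := ?_ }, fun n x => hZ n x, ?_⟩
    · intro i j hij
      obtain rfl : j + 1 = i := hij
      exact ModuleCat.hom_ext (LinearMap.ext (fun x => hcomm j x))
    · intro n x
      exact hφseq n x
  · intro f g hf hg hff hgg
    have hsub : ∀ n x, f.f n x - g.f n x ∈ Fl.B n := by
      intro n x
      have h := (hff n x).trans (hgg n x).symm
      have h2 := (Submodule.Quotient.eq _).mp h
      exact h2
    exact myexists_s Fl hGood hDfree f g hsub
end
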